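/- Let R be a commutative ring, let 𝔸 = (A_1,…,A_a) and 𝔹 = (B_1,…,B_b) be tuples of elements of R, and write r(𝔸,𝔹) = Σ_{α ∈ P(a,b)} (−1)^{|α̂^t|} s_α(𝔸) · s_{α̂^t}(𝔹) (and analogously r(𝔹,𝔸) = Σ_{β ∈ P(b,a)} (−1)^{|β̂^t|} s_β(𝔹) · s_{β̂^t}(𝔸)). Then r(𝔹,𝔸) = (−1)^{ab} · r(𝔸,𝔹). -/

import Mathlib

open Finset

/-- Complete homogeneous symmetric polynomial `h_k` of a tuple
(sum of all monomials of degree `k`). -/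
noncomputable def hh {R : Type*} [CommRing R] {n : ℕ} (A : Fin n → R) (k : ℕ) : R :=
  ∑ c ∈ Finset.Nat.antidiagonalTuple n k, ∏ i, A i ^ c i

/-- Elementary symmetric polynomial `e_k` of a tuple. -/
noncomputable def ee {R : Type*} [CommRing R] {n : ℕ} (A : Fin n → R) (k : ℕ) : R :=
  ∑ s ∈ Finset.powersetCard k (Finset.univ : Finset (Fin n)), ∏ i ∈ s, A i

/-- `h` with integer index, vanishing for negative index. -/
noncomputable def hZ {R : Type*} [CommRing R] {n : ℕ} (A : Fin n → R) (k : ℤ) : R :=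
  if 0 ≤ k then hh A k.toNat else 0

/-- The Schur polynomial of a partition `α` with at most `ℓ` parts, evaluated at a
tuple, defined via the Jacobi–Trudi formula `s_α = det (h_{α_i + j - i})`. -/
noncomputable def schur {R : Type*} [CommRing R] {n ℓ : ℕ} (A : Fin n → R)
    (α : Fin ℓ → ℕ) : R :=
  Matrix.det (Matrix.of fun i j : Fin ℓ => hZ A ((α i : ℤ) + (j : ℕ) - (i : ℕ)))

/-- `P(a,b)`: partitions with at most `a` parts, each of size at most `b`,
recorded as weakly decreasing functions `Fin a → ℕ` with values `≤ b`. -/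
def box (a b : ℕ) : Finset (Fin a → ℕ) :=
  ((Finset.univ : Finset (Fin a → Fin (b + 1))).image fun f i => ((f i : ℕ))).filter
    fun α => ∀ i j : Fin a, i ≤ j → α j ≤ α i

/-- The transpose of a partition with at most `a` parts, recorded with `b` parts:
`(α^t)_j = #{i | α_i > j}` (0-indexed). -/
def tr {a : ℕ} (b : ℕ) (α : Fin a → ℕ) : Fin b → ℕ :=
  fun j => (Finset.univ.filter fun i : Fin a => (j : ℕ) < α i).card

/-- The complement `α̂` of a partition `α ∈ P(a,b)` inside the `a × b` box:
`α̂_{a+1-j} = b - α_j`. -/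
def boxCompl {a : ℕ} (b : ℕ) (α : Fin a → ℕ) : Fin a → ℕ :=
  fun i => b - α i.rev

/-- `α̂^t ∈ P(b,a)`: the transpose of the complement of `α ∈ P(a,b)`. -/
def compTr (a b : ℕ) (α : Fin a → ℕ) : Fin b → ℕ :=
  tr b (boxCompl b α)

/-- The number of boxes `|α|` of a partition. -/
def wt {a : ℕ} (α : Fin a → ℕ) : ℕ := ∑ i, α i

/-- `r(𝔸,𝔹) = Σ_{α ∈ P(a,b)} (−1)^{|α̂^t|} s_α(𝔸) · s_{α̂^t}(𝔹)`. -/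
noncomputable def rpoly {R : Type*} [CommRing R] {a b : ℕ} (A : Fin a → R) (B : Fin b → R) : R :=
  ∑ α ∈ box a b, (-1 : R) ^ wt (compTr a b α) * schur A α * schur B (compTr a b α)

/-!
Transposing the complement is an involution `α ↦ α̂ᵗ` from `P(a,b)` onto `P(b,a)` that sends
`|α|` to `ab - |α|`. Reindexing `r(𝔹,𝔸)` along it turns each summand
`(-1)^{|β̂ᵗ|} s_β(𝔹) s_{β̂ᵗ}(𝔸)` into `(-1)^{|α|} s_{α̂ᵗ}(𝔹) s_α(𝔸)`, which is `(-1)^{ab}` times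
the `α`-summand of `r(𝔸,𝔹)`.
-/

lemma neg_one_pow_mul_neg_one_pow_of_add_eq {M : Type*} [Monoid M] [HasDistribNeg M]
    {n k w : ℕ} (h : k + w = n) : (-1 : M) ^ n * (-1 : M) ^ k = (-1 : M) ^ w := by
  rw [← h, ← pow_add, show k + w + k = w + 2 * k by ring, pow_add, pow_mul, neg_one_sq, one_pow,
    mul_one]

lemma Finset.card_filter_univ_comp_equiv {α : Type*} [Fintype α] (e : α ≃ α) (p : α → Prop)
    [DecidablePred p] : #{x | p (e x)} = #{x | p x} :=
  card_equiv e (by simp)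

section Partitions

variable {a b : ℕ}

lemma mem_box_iff {α : Fin a → ℕ} : α ∈ box a b ↔ (∀ i, α i ≤ b) ∧ Antitone α := by
  simp only [_root_.box, mem_filter, mem_image, mem_univ, true_and, Antitone]
  constructor
  · rintro ⟨⟨f, rfl⟩, hα⟩
    exact ⟨fun i => Nat.lt_succ_iff.mp (f i).isLt, hα⟩
  · rintro ⟨hb, hα⟩
    exact ⟨⟨fun i => ⟨α i, Nat.lt_succ_of_le (hb i)⟩, rfl⟩, hα⟩

lemma tr_le (α : Fin a → ℕ) (j : Fin b) : tr b α j ≤ a :=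
  (card_filter_le _ _).trans_eq (card_fin a)

lemma tr_antitone (α : Fin a → ℕ) : Antitone (tr b α) := fun j j' hjj' =>
  card_le_card fun i => by
    simp only [mem_filter, mem_univ, true_and]
    exact lt_of_le_of_lt (Fin.le_def.mp hjj')

lemma lt_tr_iff {α : Fin a → ℕ} (hα : Antitone α) (i : Fin a) (j : Fin b) :
    (i : ℕ) < tr b α j ↔ (j : ℕ) < α i :=
  Fin.lt_card_filter_univ_iff_apply_of_imp _ fun _ _ hji hj => hj.trans_le (hα hji)

lemma tr_tr {α : Fin a → ℕ} (hb : ∀ i, α i ≤ b) (hα : Antitone α) : tr a (tr b α) = α := by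
  funext i
  change #{j : Fin b | (i : ℕ) < tr b α j} = α i
  simp_rw [lt_tr_iff hα]
  rw [Fin.card_filter_val_lt, min_eq_right (hb i)]

lemma wt_tr {α : Fin a → ℕ} (hb : ∀ i, α i ≤ b) : wt (tr b α) = wt α := by
  simp only [wt, tr, card_filter]
  rw [sum_comm]
  refine sum_congr rfl fun i _ => ?_
  rw [← card_filter, Fin.card_filter_val_lt, min_eq_right (hb i)]

lemma boxCompl_boxCompl {α : Fin a → ℕ} (hb : ∀ i, α i ≤ b) : boxCompl b (boxCompl b α) = α := by
  funext i
  simp only [boxCompl, Fin.rev_rev]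
  have := hb i
  omega

lemma wt_boxCompl_add_wt {α : Fin a → ℕ} (hb : ∀ i, α i ≤ b) :
    wt (boxCompl b α) + wt α = a * b := by
  rw [wt, wt, ← Equiv.sum_comp Fin.revPerm α, ← sum_add_distrib]
  simp [boxCompl, Nat.sub_add_cancel (hb _)]

lemma boxCompl_tr (δ : Fin a → ℕ) : boxCompl a (tr b δ) = tr b (boxCompl b δ) := by
  funext j
  have hsplit := card_filter_add_card_filter_not (s := univ) fun i : Fin a => (j.rev : ℕ) < δ i
  rw [card_univ, Fintype.card_fin] at hsplit
  have hcompl : #{i : Fin a | ¬ (j.rev : ℕ) < δ i} = #{i : Fin a | (j : ℕ) < b - δ i} := by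
    congr 1
    refine filter_congr fun i _ => ?_
    have := Fin.val_rev j
    omega
  have hrev : #{i : Fin a | (j : ℕ) < b - δ i.rev} = #{i : Fin a | (j : ℕ) < b - δ i} :=
    card_filter_univ_comp_equiv Fin.revPerm fun i => (j : ℕ) < b - δ i
  change a - #{i : Fin a | (j.rev : ℕ) < δ i} = #{i : Fin a | (j : ℕ) < b - δ i.rev}
  omega

lemma compTr_mem_box (α : Fin a → ℕ) : compTr a b α ∈ box b a :=
  mem_box_iff.mpr ⟨tr_le _, tr_antitone _⟩

lemma compTr_compTr {α : Fin a → ℕ} (hα : α ∈ box a b) : compTr b a (compTr a b α) = α := by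
  obtain ⟨hb, hanti⟩ := mem_box_iff.mp hα
  rw [compTr, compTr, boxCompl_tr, boxCompl_boxCompl hb, tr_tr hb hanti]

lemma wt_compTr_add_wt {α : Fin a → ℕ} (hα : α ∈ box a b) : wt (compTr a b α) + wt α = a * b := by
  rw [compTr, wt_tr (α := boxCompl b α) fun _ => Nat.sub_le _ _,
    wt_boxCompl_add_wt (mem_box_iff.mp hα).1]

end Partitions

/-- `r(𝔹,𝔸) = (−1)^{ab} · r(𝔸,𝔹)`. -/
theorem statement1 {R : Type*} [CommRing R] {a b : ℕ} (A : Fin a → R) (B : Fin b → R) :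
    rpoly B A = (-1 : R) ^ (a * b) * rpoly A B := by
  have reindex : rpoly B A =
      ∑ α ∈ box a b, (-1 : R) ^ wt α * schur A α * schur B (compTr a b α) := by
    refine sum_nbij' (compTr b a) (compTr a b) (fun β _ => compTr_mem_box β)
      (fun α _ => compTr_mem_box α) (fun β hβ => compTr_compTr hβ) (fun α hα => compTr_compTr hα)
      fun β hβ => ?_
    rw [compTr_compTr hβ]
    ring
  rw [reindex, rpoly, mul_sum]
  refine sum_congr rfl fun α hα => ?_
  rw [← neg_one_pow_mul_neg_one_pow_of_add_eq (wt_compTr_add_wt hα)]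
  ring
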